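/- Consider a budgeted fair-division instance with three agents with budgets B_1 ≤ B_2 ≤ B_3, let OPT be a budget-feasible allocation maximizing the Nash social welfare with v_i(OPT_i) > 0 for all i, and let 0 < α ≤ 1/10. If m_2(B_1) < α·v_2(OPT_2) and m_3(B_1) < α·v_3(OPT_3), then there exists a budget-feasible allocation Y that is EFx with respect to budgets and satisfies NSW(Y) ≥ ((1−α)²/(4·6·6))^{1/3} · NSW(OPT). -/
import Mathlib


/-!
STATEMENT 11: Three agents with budgets B₁ ≤ B₂ ≤ B₃, OPT a maximum-Nash-welfare
budget-feasible allocation with v_i(OPT_i) > 0, and 0 < α ≤ 1/10.  If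
m₂(B₁) < α·v₂(OPT₂) and m₃(B₁) < α·v₃(OPT₃), then there is a budget-feasible EFx
allocation Y with NSW(Y) ≥ ((1−α)²/(4·6·6))^{1/3} · NSW(OPT).
-/

open Finset

variable {G : Type*}

/-- Total of an additive function over a bundle. -/
def tot (f : G → ℝ) (S : Finset G) : ℝ := ∑ g ∈ S, f g

/-- `X` is a budget-feasible allocation of (a subset of) the goods in `M`. -/
def IsAlloc {n : ℕ} (M : Finset G) (c : G → ℝ) (B : Fin n → ℝ)
    (X : Fin n → Finset G) : Prop :=
  (∀ i, X i ⊆ M) ∧ (∀ i j, i ≠ j → Disjoint (X i) (X j)) ∧ (∀ i, tot c (X i) ≤ B i)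

/-- EFx with respect to budgets. -/
def IsEFx [DecidableEq G] {n : ℕ} (c : G → ℝ) (B : Fin n → ℝ) (v : Fin n → G → ℝ)
    (X : Fin n → Finset G) : Prop :=
  ∀ i j, ∀ S ⊆ X j, tot c S ≤ B i → ∀ g ∈ S, tot (v i) (S.erase g) ≤ tot (v i) (X i)

/-- Nash social welfare of an `n`-agent allocation. -/
noncomputable def NSW {n : ℕ} (v : Fin n → G → ℝ) (X : Fin n → Finset G) : ℝ :=
  (∏ i, tot (v i) (X i)) ^ ((1 : ℝ) / n)

/-- Monopoly value of an agent with valuation `v` and budget `B`: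
the best value of a bundle of goods from `M` of cost at most `B`. -/
noncomputable def monopoly (M : Finset G) (c : G → ℝ) (B : ℝ) (v : G → ℝ) : ℝ :=
  sSup {x : ℝ | ∃ S ⊆ M, tot c S ≤ B ∧ tot v S = x}

namespace EfxAux

lemma tot_nonneg {f : G → ℝ} {S : Finset G} (h : ∀ g ∈ S, 0 ≤ f g) : 0 ≤ tot f S :=
  Finset.sum_nonneg h

lemma tot_mono {f : G → ℝ} {S T : Finset G} (hST : S ⊆ T) (h : ∀ g ∈ T, 0 ≤ f g) :
    tot f S ≤ tot f T :=
  Finset.sum_le_sum_of_subset_of_nonneg hST fun g hg _ => h g hg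

lemma tot_erase_le [DecidableEq G] {f : G → ℝ} {S T : Finset G} (g : G) (hST : S ⊆ T)
    (h : ∀ x ∈ T, 0 ≤ f x) : tot f (S.erase g) ≤ tot f T :=
  tot_mono ((S.erase_subset g).trans hST) h

lemma tot_erase_eq [DecidableEq G] {f : G → ℝ} {S : Finset G} {g : G} (hg : g ∈ S) :
    tot f (S.erase g) = tot f S - f g := by
  have := Finset.sum_erase_add S f hg
  unfold tot; linarith

lemma tot_sdiff_eq [DecidableEq G] {f : G → ℝ} {S T : Finset G} (h : S ⊆ T) :
    tot f (T \ S) = tot f T - tot f S := by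
  have := Finset.sum_sdiff (f := f) h
  unfold tot; linarith

lemma tot_singleton {f : G → ℝ} (g : G) : tot f {g} = f g := Finset.sum_singleton _ _

lemma tot_empty {f : G → ℝ} : tot f (∅ : Finset G) = 0 := rfl

lemma tot_inter_add_diff [DecidableEq G] {f : G → ℝ} (S T : Finset G) :
    tot f (S ∩ T) + tot f (S \ T) = tot f S :=
  Finset.sum_inter_add_sum_sdiff S T f

lemma singleton_envy [DecidableEq G] {f : G → ℝ} {Y : Finset G} {z : G}
    (hY : 0 ≤ tot f Y) {S : Finset G} (hS : S ⊆ {z}) {g : G} (hg : g ∈ S) :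
    tot f (S.erase g) ≤ tot f Y := by
  have hgz : g = z := Finset.mem_singleton.1 (hS hg)
  have hemp : S.erase g = ∅ := by
    apply Finset.subset_empty.1
    intro x hx
    rcases Finset.mem_erase.1 hx with ⟨hne, hxS⟩
    exact absurd ((Finset.mem_singleton.1 (hS hxS)).trans hgz.symm) hne
  rw [hemp, tot_empty]; exact hY

lemma exists_best [DecidableEq G] (D : Finset G) (c f : G → ℝ) (b : ℝ) (hb : 0 ≤ b) :
    ∃ P, P ⊆ D ∧ tot c P ≤ b ∧ ∀ S, S ⊆ D → tot c S ≤ b → tot f S ≤ tot f P := by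
  have hne : (D.powerset.filter fun S => tot c S ≤ b).Nonempty :=
    ⟨∅, by simp [tot_empty, hb]⟩
  obtain ⟨P, hP, hmax⟩ := Finset.exists_max_image _ (tot f) hne
  rw [Finset.mem_filter, Finset.mem_powerset] at hP
  exact ⟨P, hP.1, hP.2, fun S hS hcS =>
    hmax S (by rw [Finset.mem_filter, Finset.mem_powerset]; exact ⟨hS, hcS⟩)⟩

lemma exists_balanced [DecidableEq G] (Z : Finset G) (u : G → ℝ)
    (hu : ∀ g ∈ Z, 0 ≤ u g) (hnohot : ∀ g ∈ Z, 2 * u g ≤ tot u Z) :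
    ∃ C, C ⊆ Z ∧
      (∀ g ∈ C, tot u (C.erase g) ≤ tot u (Z \ C)) ∧
      (∀ g ∈ Z \ C, tot u ((Z \ C).erase g) ≤ tot u C) ∧
      tot u Z ≤ 4 * tot u C ∧ tot u Z ≤ 4 * tot u (Z \ C) := by
  have huZ : 0 ≤ tot u Z := tot_nonneg hu
  set F := Z.powerset.filter (fun C => tot u Z ≤ 2 * tot u C) with hF
  have hFne : F.Nonempty := by
    refine ⟨Z, ?_⟩
    rw [hF, Finset.mem_filter, Finset.mem_powerset]
    exact ⟨Finset.Subset.refl _, by linarith⟩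
  obtain ⟨C₁, hC₁, hmin₁⟩ := Finset.exists_min_image F (tot u) hFne
  set F2 := F.filter (fun C => tot u C ≤ tot u C₁) with hF2
  have hF2ne : F2.Nonempty := ⟨C₁, by rw [hF2, Finset.mem_filter]; exact ⟨hC₁, le_refl _⟩⟩
  obtain ⟨C, hCmem, hmin₂⟩ := Finset.exists_min_image F2 (fun C => C.card) hF2ne
  rw [hF2, Finset.mem_filter] at hCmem
  obtain ⟨hCF, hCle⟩ := hCmem
  have hCF' := hCF
  rw [hF, Finset.mem_filter, Finset.mem_powerset] at hCF'
  obtain ⟨hCZ, hC2⟩ := hCF'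
  have hsd : tot u (Z \ C) = tot u Z - tot u C := tot_sdiff_eq hCZ
  have ha : ∀ g ∈ C, tot u (C.erase g) ≤ tot u (Z \ C) := by
    intro g hg
    by_contra hcon
    push_neg at hcon
    have hgZ : g ∈ Z := hCZ hg
    have hug : 0 ≤ u g := hu g hgZ
    have hce : tot u (C.erase g) = tot u C - u g := tot_erase_eq hg
    have hd : u g < 2 * tot u C - tot u Z := by rw [hce] at hcon; linarith
    rcases eq_or_lt_of_le hug with h0 | hpos
    · have hmem : C.erase g ∈ F2 := by
        rw [hF2, Finset.mem_filter, hF, Finset.mem_filter, Finset.mem_powerset]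
        refine ⟨⟨(C.erase_subset g).trans hCZ, ?_⟩, ?_⟩
        · rw [hce, ← h0]; linarith
        · rw [hce, ← h0]; linarith
      have h1 := hmin₂ _ hmem
      have h2 := Finset.card_erase_lt_of_mem hg
      omega
    · by_cases hsplit : tot u Z ≤ 2 * (tot u C - u g)
      · have hmem : C.erase g ∈ F := by
          rw [hF, Finset.mem_filter, Finset.mem_powerset]
          exact ⟨(C.erase_subset g).trans hCZ, by rw [hce]; linarith⟩
        have h1 := hmin₁ _ hmem
        rw [hce] at h1
        linarith
      · push_neg at hsplit
        have hmem : Z \ (C.erase g) ∈ F := by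
          rw [hF, Finset.mem_filter, Finset.mem_powerset]
          refine ⟨Finset.sdiff_subset, ?_⟩
          rw [tot_sdiff_eq ((C.erase_subset g).trans hCZ), hce]
          linarith
        have h1 := hmin₁ _ hmem
        rw [tot_sdiff_eq ((C.erase_subset g).trans hCZ), hce] at h1
        linarith
  have hb' : ∀ g ∈ Z \ C, tot u ((Z \ C).erase g) ≤ tot u C := by
    intro g hg
    have h1 : tot u ((Z \ C).erase g) ≤ tot u (Z \ C) :=
      tot_mono (Finset.erase_subset _ _) fun x hx => hu x (Finset.sdiff_subset hx)
    linarith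
  have hq : tot u Z ≤ 4 * tot u C := by linarith
  have hq2 : tot u Z ≤ 4 * tot u (Z \ C) := by
    rcases Finset.eq_empty_or_nonempty C with hE | ⟨g, hg⟩
    · have h0 : tot u C = 0 := by rw [hE]; rfl
      rw [h0] at hC2
      rw [hsd, h0]
      linarith
    · have h1 := ha g hg
      have hce : tot u (C.erase g) = tot u C - u g := tot_erase_eq hg
      have h2 := hnohot g (hCZ hg)
      rw [hce] at h1
      linarith
  exact ⟨C, hCZ, ha, hb', hq, hq2⟩

end EfxAux

namespace EfxAux

/-- Split a fully-affordable pool `Q` (no item carries more than half the `u`-value)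
into an EFx pair: agent 1 keeps a quarter of the `u`-value and agent 2 keeps
half of the `w`-value. -/
lemma split_pool [DecidableEq G] (Q : Finset G) (c u w : G → ℝ) (b1 b2 : ℝ)
    (hb12 : b1 ≤ b2)
    (hcn : ∀ g ∈ Q, 0 ≤ c g) (hun : ∀ g ∈ Q, 0 ≤ u g) (hwn : ∀ g ∈ Q, 0 ≤ w g)
    (hQc : tot c Q ≤ b1)
    (hnohot : ∀ g ∈ Q, 2 * u g ≤ tot u Q) :
    ∃ Y1 Y2 : Finset G, Y1 ⊆ Q ∧ Y2 ⊆ Q ∧ Disjoint Y1 Y2 ∧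
      tot c Y1 ≤ b1 ∧ tot c Y2 ≤ b2 ∧
      tot u Q ≤ 4 * tot u Y1 ∧ tot w Q ≤ 2 * tot w Y2 ∧
      (∀ S ⊆ Y2, ∀ g ∈ S, tot u (S.erase g) ≤ tot u Y1) ∧
      (∀ S ⊆ Y1, ∀ g ∈ S, tot w (S.erase g) ≤ tot w Y2) := by
  obtain ⟨C, hCQ, hefx1, hefx2, hval1, hval2⟩ := exists_balanced Q u hun hnohot
  have hCc : tot c C ≤ b1 := le_trans (tot_mono hCQ hcn) hQc
  have hC'c : tot c (Q \ C) ≤ b1 := le_trans (tot_mono Finset.sdiff_subset hcn) hQc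
  have hwsd : tot w (Q \ C) = tot w Q - tot w C := tot_sdiff_eq hCQ
  rcases le_total (tot w C) (tot w (Q \ C)) with hwle | hwle
  · -- agent 2 gets Q \ C, agent 1 gets C
    refine ⟨C, Q \ C, hCQ, Finset.sdiff_subset, Finset.disjoint_sdiff, hCc,
      le_trans hC'c hb12, hval1, by linarith, ?_, ?_⟩
    · intro S hS g hg
      have h1 : tot u (S.erase g) ≤ tot u ((Q \ C).erase g) :=
        tot_mono (Finset.erase_subset_erase g hS)
          (fun x hx => hun x (Finset.sdiff_subset (Finset.erase_subset _ _ hx)))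
      exact le_trans h1 (hefx2 g (hS hg))
    · intro S hS g _
      have h1 : tot w (S.erase g) ≤ tot w C :=
        tot_erase_le g hS (fun x hx => hwn x (hCQ hx))
      exact le_trans h1 hwle
  · -- agent 2 gets C, agent 1 gets Q \ C
    refine ⟨Q \ C, C, Finset.sdiff_subset, hCQ, Finset.disjoint_sdiff.symm, hC'c,
      le_trans hCc hb12, hval2, by linarith, ?_, ?_⟩
    · intro S hS g hg
      have h1 : tot u (S.erase g) ≤ tot u (C.erase g) :=
        tot_mono (Finset.erase_subset_erase g hS)
          (fun x hx => hun x (hCQ (Finset.erase_subset _ _ hx)))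
      exact le_trans h1 (hefx1 g (hS hg))
    · intro S hS g _
      have h1 : tot w (S.erase g) ≤ tot w (Q \ C) :=
        tot_erase_le g hS (fun x hx => hwn x (Finset.sdiff_subset hx))
      exact le_trans h1 hwle

end EfxAux

namespace EfxAux

/-- Two agents with budgets `b1 ≤ b2` and disjoint target bundles `A1, A2` can split
the pool `A1 ∪ A2` in an EFx way, each keeping an eighth of the value of its target. -/
lemma two_agent [DecidableEq G] (A1 A2 : Finset G) (c u w : G → ℝ) (b1 b2 : ℝ)
    (hdisj : Disjoint A1 A2)
    (hc : ∀ g ∈ A1 ∪ A2, 0 ≤ c g) (hu : ∀ g ∈ A1 ∪ A2, 0 ≤ u g)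
    (hw : ∀ g ∈ A1 ∪ A2, 0 ≤ w g)
    (hb1 : 0 ≤ b1) (hb12 : b1 ≤ b2)
    (hcA1 : tot c A1 ≤ b1) (hcA2 : tot c A2 ≤ b2) :
    ∃ Y1 Y2 : Finset G, Y1 ⊆ A1 ∪ A2 ∧ Y2 ⊆ A1 ∪ A2 ∧ Disjoint Y1 Y2 ∧
      tot c Y1 ≤ b1 ∧ tot c Y2 ≤ b2 ∧
      tot u A1 ≤ 8 * tot u Y1 ∧ tot w A2 ≤ 8 * tot w Y2 ∧
      (∀ S ⊆ Y2, tot c S ≤ b1 → ∀ g ∈ S, tot u (S.erase g) ≤ tot u Y1) ∧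
      (∀ S ⊆ Y1, ∀ g ∈ S, tot w (S.erase g) ≤ tot w Y2) := by
  classical
  set D := A1 ∪ A2 with hD
  have hA1D : A1 ⊆ D := Finset.subset_union_left
  have hA2D : A2 ⊆ D := Finset.subset_union_right
  have huA1 : 0 ≤ tot u A1 := tot_nonneg fun g hg => hu g (hA1D hg)
  have hwA2 : 0 ≤ tot w A2 := tot_nonneg fun g hg => hw g (hA2D hg)
  -- P : agent 1's best affordable bundle in the whole pool
  obtain ⟨P, hPD, hPc, hPmax⟩ := exists_best D c u b1 hb1
  have hcP : ∀ g ∈ P, 0 ≤ c g := fun g hg => hc g (hPD hg)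
  have huP : ∀ g ∈ P, 0 ≤ u g := fun g hg => hu g (hPD hg)
  have hwP : ∀ g ∈ P, 0 ≤ w g := fun g hg => hw g (hPD hg)
  have hPA1 : tot u A1 ≤ tot u P := hPmax A1 hA1D hcA1
  have huPn : 0 ≤ tot u P := le_trans huA1 hPA1
  -- N : agent 2's best affordable bundle avoiding P
  obtain ⟨N, hND, hNc, hNmax⟩ := exists_best (D \ P) c w b2 (le_trans hb1 hb12)
  have hNA2 : tot w (A2 \ P) ≤ tot w N :=
    hNmax (A2 \ P) (Finset.sdiff_subset_sdiff hA2D (Finset.Subset.refl P))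
      (le_trans (tot_mono Finset.sdiff_subset fun g hg => hc g (hA2D hg)) hcA2)
  have hNn : 0 ≤ tot w N :=
    tot_nonneg fun g hg => hw g (Finset.sdiff_subset (hND hg))
  by_cases hab : tot w P ≤ tot w N
  · -- CASE α : give (P, N)
    have hsplitA2 : tot w (A2 ∩ P) + tot w (A2 \ P) = tot w A2 := tot_inter_add_diff A2 P
    have hintP : tot w (A2 ∩ P) ≤ tot w P := tot_mono Finset.inter_subset_right hwP
    refine ⟨P, N, hPD, hND.trans Finset.sdiff_subset,
      (Finset.disjoint_of_subset_right hND Finset.disjoint_sdiff), hPc, hNc,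
      by linarith, by linarith, ?_, ?_⟩
    · intro S hS hcS g _
      have h1 : tot u (S.erase g) ≤ tot u S :=
        tot_mono (Finset.erase_subset _ _)
          (fun x hx => hu x (Finset.sdiff_subset (hND (hS hx))))
      exact le_trans h1 (hPmax S ((hS.trans hND).trans Finset.sdiff_subset) hcS)
    · intro S hS g _
      have h1 : tot w (S.erase g) ≤ tot w P := tot_erase_le g hS hwP
      linarith
  · -- CASE β : agent 2 covets P
    push_neg at hab
    have hwPA2 : tot w A2 < 2 * tot w P := by
      have hsplitA2 : tot w (A2 ∩ P) + tot w (A2 \ P) = tot w A2 := tot_inter_add_diff A2 P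
      have hintP : tot w (A2 ∩ P) ≤ tot w P := tot_mono Finset.inter_subset_right hwP
      linarith
    by_cases hot : ∃ z ∈ P, tot u P < 2 * u z
    · -- a u-hot item z exists in P
      obtain ⟨z, hzP, hz⟩ := hot
      have hzD : z ∈ D := hPD hzP
      have huz : 0 ≤ u z := hu z hzD
      have hwz0 : 0 ≤ w z := hw z hzD
      have hcz : c z ≤ b1 := by
        have h1 : tot c {z} ≤ tot c P := tot_mono (Finset.singleton_subset_iff.2 hzP) hcP
        rw [tot_singleton] at h1; linarith
      by_cases h2a : tot w P ≤ 2 * tot w (P.erase z)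
      · -- Y = ({z}, P.erase z)
        have hPe : tot u (P.erase z) = tot u P - u z := tot_erase_eq hzP
        refine ⟨{z}, P.erase z, Finset.singleton_subset_iff.2 hzD,
          (Finset.erase_subset _ _).trans hPD,
          Finset.disjoint_singleton_left.2 (Finset.notMem_erase _ _),
          by rw [tot_singleton]; exact hcz,
          le_trans (tot_mono (Finset.erase_subset _ _) hcP) (le_trans hPc hb12),
          ?_, ?_, ?_, ?_⟩
        · rw [tot_singleton]; linarith
        · linarith
        · intro S hS _ g hg
          have h1 : tot u (S.erase g) ≤ tot u (P.erase z) :=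
            tot_mono ((Finset.erase_subset _ _).trans hS)
              (fun x hx => hu x (hPD (Finset.erase_subset _ _ hx)))
          rw [tot_singleton]; linarith
        · intro S hS g hg
          exact singleton_envy
            (tot_nonneg fun x hx => hw x (hPD (Finset.erase_subset _ _ hx))) hS hg
      · -- z is also w-hot in P
        push_neg at h2a
        have hwze : tot w (P.erase z) = tot w P - w z := tot_erase_eq hzP
        have hwz : tot w P < 2 * w z := by linarith
        rcases Finset.mem_union.1 hzD with hzA1 | hzA2
        · -- z ∈ A1
          obtain ⟨Q, hQD, hQc, hQmax⟩ := exists_best (D.erase z) c u b1 hb1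
          have hQD' : Q ⊆ D := hQD.trans (Finset.erase_subset _ _)
          have hcQ : ∀ g ∈ Q, 0 ≤ c g := fun g hg => hc g (hQD' hg)
          have huQ : ∀ g ∈ Q, 0 ≤ u g := fun g hg => hu g (hQD' hg)
          have hwQn : ∀ g ∈ Q, 0 ≤ w g := fun g hg => hw g (hQD' hg)
          by_cases hk : tot u P ≤ 2 * tot u Q
          · -- agent 1 can survive without z
            by_cases hT1 : ∀ g ∈ Q, tot w (Q.erase g) ≤ w z
            · -- Y = (Q, {z})
              refine ⟨Q, {z}, hQD', Finset.singleton_subset_iff.2 hzD,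
                Finset.disjoint_singleton_right.2
                  (fun hmem => (Finset.mem_erase.1 (hQD hmem)).1 rfl),
                hQc, by rw [tot_singleton]; linarith, by linarith,
                by rw [tot_singleton]; linarith, ?_, ?_⟩
              · intro S hS _ g hg
                exact singleton_envy (by linarith) hS hg
              · intro S hS g hg
                have h1 : tot w (S.erase g) ≤ tot w (Q.erase g) :=
                  tot_mono (Finset.erase_subset_erase g hS)
                    (fun x hx => hw x (hQD' (Finset.erase_subset _ _ hx)))
                rw [tot_singleton]
                exact le_trans h1 (hT1 g (hS hg))
            · push_neg at hT1
              obtain ⟨g₁, hg₁Q, hg₁⟩ := hT1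
              have hwQ : w z < tot w Q :=
                lt_of_lt_of_le hg₁ (tot_mono (Finset.erase_subset _ _) hwQn)
              by_cases hotQ : ∃ z' ∈ Q, tot u Q < 2 * u z'
              · -- Y = ({z'}, {z})
                obtain ⟨z', hz'Q, hz'⟩ := hotQ
                have hz'D : z' ∈ D := hQD' hz'Q
                have huz' : 0 ≤ u z' := hu z' hz'D
                have hcz' : c z' ≤ b1 := by
                  have h1 : tot c {z'} ≤ tot c Q :=
                    tot_mono (Finset.singleton_subset_iff.2 hz'Q) hcQ
                  rw [tot_singleton] at h1; linarith
                refine ⟨{z'}, {z}, Finset.singleton_subset_iff.2 hz'D,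
                  Finset.singleton_subset_iff.2 hzD,
                  Finset.disjoint_singleton.2 (Finset.mem_erase.1 (hQD hz'Q)).1,
                  by rw [tot_singleton]; exact hcz',
                  by rw [tot_singleton]; linarith, ?_, ?_, ?_, ?_⟩
                · rw [tot_singleton]; linarith
                · rw [tot_singleton]; linarith
                · intro S hS _ g hg
                  exact singleton_envy (by rw [tot_singleton]; linarith) hS hg
                · intro S hS g hg
                  exact singleton_envy (by rw [tot_singleton]; linarith) hS hg
              · push_neg at hotQ
                obtain ⟨Y1, Y2, hY1Q, hY2Q, hYdisj, hY1c, hY2c, hYu, hYw, hE12, hE21⟩ :=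
                  split_pool Q c u w b1 b2 hb12 hcQ huQ hwQn hQc
                    hotQ
                refine ⟨Y1, Y2, hY1Q.trans hQD', hY2Q.trans hQD', hYdisj, hY1c, hY2c,
                  by linarith, by linarith, fun S hS _ g hg => hE12 S hS g hg, hE21⟩
          · -- agent 1 must take z: Y = ({z}, R)
            push_neg at hk
            obtain ⟨R, hRD, hRc, hRmax⟩ := exists_best (D.erase z) c w b2 (le_trans hb1 hb12)
            have hRD' : R ⊆ D := hRD.trans (Finset.erase_subset _ _)
            have hA2z : A2 ⊆ D.erase z := fun x hx =>
              Finset.mem_erase.2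
                ⟨fun hxz => (Finset.disjoint_left.1 hdisj hzA1) (hxz ▸ hx), hA2D hx⟩
            have hRA2 : tot w A2 ≤ tot w R := hRmax A2 hA2z hcA2
            refine ⟨{z}, R, Finset.singleton_subset_iff.2 hzD, hRD',
              Finset.disjoint_singleton_left.2
                (fun hmem => (Finset.mem_erase.1 (hRD hmem)).1 rfl),
              by rw [tot_singleton]; exact hcz, hRc,
              by rw [tot_singleton]; linarith, by linarith, ?_, ?_⟩
            · intro S hS hcS g hg
              have h1 : tot u (S.erase g) ≤ tot u S :=
                tot_mono (Finset.erase_subset _ _) (fun x hx => hu x (hRD' (hS hx)))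
              have h2 : tot u S ≤ tot u Q := hQmax S (hS.trans hRD) hcS
              rw [tot_singleton]; linarith
            · intro S hS g hg
              exact singleton_envy (by linarith) hS hg
        · -- z ∈ A2 : agent 2 gets {z}, agent 1 keeps its best bundle avoiding z
          obtain ⟨Q, hQD, hQc, hQmax⟩ := exists_best (D.erase z) c u b1 hb1
          have hQD' : Q ⊆ D := hQD.trans (Finset.erase_subset _ _)
          have hcQ : ∀ g ∈ Q, 0 ≤ c g := fun g hg => hc g (hQD' hg)
          have huQ : ∀ g ∈ Q, 0 ≤ u g := fun g hg => hu g (hQD' hg)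
          have hwQn : ∀ g ∈ Q, 0 ≤ w g := fun g hg => hw g (hQD' hg)
          have hA1z : A1 ⊆ D.erase z := fun x hx =>
            Finset.mem_erase.2
              ⟨fun hxz => (Finset.disjoint_right.1 hdisj hzA2) (hxz ▸ hx), hA1D hx⟩
          have hQA1 : tot u A1 ≤ tot u Q := hQmax A1 hA1z hcA1
          by_cases hT1 : ∀ g ∈ Q, tot w (Q.erase g) ≤ w z
          · -- Y = (Q, {z})
            refine ⟨Q, {z}, hQD', Finset.singleton_subset_iff.2 hzD,
              Finset.disjoint_singleton_right.2
                (fun hmem => (Finset.mem_erase.1 (hQD hmem)).1 rfl),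
              hQc, by rw [tot_singleton]; linarith,
              by linarith, by rw [tot_singleton]; linarith, ?_, ?_⟩
            · intro S hS _ g hg
              exact singleton_envy (by linarith) hS hg
            · intro S hS g hg
              have h1 : tot w (S.erase g) ≤ tot w (Q.erase g) :=
                tot_mono (Finset.erase_subset_erase g hS)
                  (fun x hx => hw x (hQD' (Finset.erase_subset _ _ hx)))
              rw [tot_singleton]
              exact le_trans h1 (hT1 g (hS hg))
          · push_neg at hT1
            obtain ⟨g₁, hg₁Q, hg₁⟩ := hT1
            have hwQ : w z < tot w Q :=
              lt_of_lt_of_le hg₁ (tot_mono (Finset.erase_subset _ _) hwQn)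
            by_cases hotQ : ∃ z' ∈ Q, tot u Q < 2 * u z'
            · -- Y = ({z'}, {z})
              obtain ⟨z', hz'Q, hz'⟩ := hotQ
              have hz'D : z' ∈ D := hQD' hz'Q
              have huz' : 0 ≤ u z' := hu z' hz'D
              have hcz' : c z' ≤ b1 := by
                have h1 : tot c {z'} ≤ tot c Q :=
                  tot_mono (Finset.singleton_subset_iff.2 hz'Q) hcQ
                rw [tot_singleton] at h1; linarith
              refine ⟨{z'}, {z}, Finset.singleton_subset_iff.2 hz'D,
                Finset.singleton_subset_iff.2 hzD,
                Finset.disjoint_singleton.2 (Finset.mem_erase.1 (hQD hz'Q)).1,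
                by rw [tot_singleton]; exact hcz',
                by rw [tot_singleton]; linarith, ?_, ?_, ?_, ?_⟩
              · rw [tot_singleton]; linarith
              · rw [tot_singleton]; linarith
              · intro S hS _ g hg
                exact singleton_envy (by rw [tot_singleton]; linarith) hS hg
              · intro S hS g hg
                exact singleton_envy (by rw [tot_singleton]; linarith) hS hg
            · push_neg at hotQ
              obtain ⟨Y1, Y2, hY1Q, hY2Q, hYdisj, hY1c, hY2c, hYu, hYw, hE12, hE21⟩ :=
                split_pool Q c u w b1 b2 hb12 hcQ huQ hwQn hQc
                  hotQ
              refine ⟨Y1, Y2, hY1Q.trans hQD', hY2Q.trans hQD', hYdisj, hY1c, hY2c,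
                by linarith, by linarith, fun S hS _ g hg => hE12 S hS g hg, hE21⟩
    · -- no u-hot item: split P directly
      push_neg at hot
      obtain ⟨Y1, Y2, hY1P, hY2P, hYdisj, hY1c, hY2c, hYu, hYw, hE12, hE21⟩ :=
        split_pool P c u w b1 b2 hb12 hcP huP hwP hPc hot
      refine ⟨Y1, Y2, hY1P.trans hPD, hY2P.trans hPD, hYdisj, hY1c, hY2c,
        by linarith, by linarith, fun S hS _ g hg => hE12 S hS g hg, hE21⟩

end EfxAux

open EfxAux in
set_option maxHeartbeats 1000000 in
theorem efx_three_agents_low_monopoly [DecidableEq G] (M : Finset G) (c : G → ℝ)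
    (B : Fin 3 → ℝ) (v : Fin 3 → G → ℝ)
    (hc : ∀ g ∈ M, 0 ≤ c g) (hB : ∀ i, 0 ≤ B i)
    (hBle : B 0 ≤ B 1 ∧ B 1 ≤ B 2)
    (hv : ∀ i, ∀ g ∈ M, 0 ≤ v i g)
    (OPT : Fin 3 → Finset G) (hOPT : IsAlloc M c B OPT)
    (hOPTpos : ∀ i, 0 < tot (v i) (OPT i))
    (hOPTmax : ∀ X : Fin 3 → Finset G, IsAlloc M c B X → NSW v X ≤ NSW v OPT)
    (α : ℝ) (hα0 : 0 < α) (hα : α ≤ 1 / 10)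
    (hm2 : monopoly M c (B 0) (v 1) < α * tot (v 1) (OPT 1))
    (hm3 : monopoly M c (B 0) (v 2) < α * tot (v 2) (OPT 2)) :
    ∃ Y : Fin 3 → Finset G,
      IsAlloc M c B Y ∧ IsEFx c B v Y ∧
      ((1 - α) ^ 2 / (4 * 6 * 6)) ^ ((1 : ℝ) / 3) * NSW v OPT ≤ NSW v Y := by
  classical
  obtain ⟨hOPTsub, hOPTdisj, hOPTbud⟩ := hOPT
  set V0 := tot (v 0) (OPT 0) with hV0def
  set V1 := tot (v 1) (OPT 1) with hV1def
  set V2 := tot (v 2) (OPT 2) with hV2def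
  have hV0 : 0 < V0 := hOPTpos 0
  have hV1 : 0 < V1 := hOPTpos 1
  have hV2 : 0 < V2 := hOPTpos 2
  -- every affordable (at budget B 0) bundle is below the monopoly value
  have hmono : ∀ i : Fin 3, ∀ S, S ⊆ M → tot c S ≤ B 0 →
      tot (v i) S ≤ monopoly M c (B 0) (v i) := by
    intro i S hS hcS
    apply le_csSup
    · have hsub : {x : ℝ | ∃ T ⊆ M, tot c T ≤ B 0 ∧ tot (v i) T = x} ⊆
          ↑((M.powerset.filter fun T => tot c T ≤ B 0).image (tot (v i))) := by
        rintro x ⟨T, hT, hcT, rfl⟩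
        simp only [Finset.coe_image, Set.mem_image, Finset.mem_coe, Finset.mem_filter,
          Finset.mem_powerset]
        exact ⟨T, ⟨hT, hcT⟩, rfl⟩
      exact (Finset.bddAbove _).mono hsub
    · exact ⟨S, hS, hcS, rfl⟩
  -- agent 0 takes its monopoly bundle
  obtain ⟨Y0, hY0M, hY0c, hY0max⟩ := exists_best M c (v 0) (B 0) (hB 0)
  have hcY0 : ∀ g ∈ Y0, 0 ≤ c g := fun g hg => hc g (hY0M hg)
  -- remaining targets for agents 1 and 2
  set A1 := OPT 1 \ Y0 with hA1def
  set A2 := OPT 2 \ Y0 with hA2def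
  have hA1M : A1 ⊆ M := Finset.sdiff_subset.trans (hOPTsub 1)
  have hA2M : A2 ⊆ M := Finset.sdiff_subset.trans (hOPTsub 2)
  have hUM : A1 ∪ A2 ⊆ M := Finset.union_subset hA1M hA2M
  have hd12 : Disjoint A1 A2 :=
    (hOPTdisj 1 2 (by decide)).mono Finset.sdiff_subset Finset.sdiff_subset
  have hcA1 : tot c A1 ≤ B 1 :=
    le_trans (tot_mono Finset.sdiff_subset fun g hg => hc g (hOPTsub 1 hg)) (hOPTbud 1)
  have hcA2 : tot c A2 ≤ B 2 :=
    le_trans (tot_mono Finset.sdiff_subset fun g hg => hc g (hOPTsub 2 hg)) (hOPTbud 2)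
  -- remaining value lower bounds
  have hval1 : (1 - α) * V1 ≤ tot (v 1) A1 := by
    have hsplit : tot (v 1) (OPT 1 ∩ Y0) + tot (v 1) (OPT 1 \ Y0) = tot (v 1) (OPT 1) :=
      tot_inter_add_diff _ _
    have hint : tot (v 1) (OPT 1 ∩ Y0) ≤ monopoly M c (B 0) (v 1) := by
      apply hmono 1 _ (Finset.inter_subset_left.trans (hOPTsub 1))
      exact le_trans (tot_mono Finset.inter_subset_right hcY0) hY0c
    rw [hA1def]
    linarith
  have hval2 : (1 - α) * V2 ≤ tot (v 2) A2 := by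
    have hsplit : tot (v 2) (OPT 2 ∩ Y0) + tot (v 2) (OPT 2 \ Y0) = tot (v 2) (OPT 2) :=
      tot_inter_add_diff _ _
    have hint : tot (v 2) (OPT 2 ∩ Y0) ≤ monopoly M c (B 0) (v 2) := by
      apply hmono 2 _ (Finset.inter_subset_left.trans (hOPTsub 2))
      exact le_trans (tot_mono Finset.inter_subset_right hcY0) hY0c
    rw [hA2def]
    linarith
  -- split the remaining pool between agents 1 and 2
  obtain ⟨Y1, Y2, hY1U, hY2U, hd12', hY1c, hY2c, hY1u, hY2w, hE12, hE21⟩ :=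
    two_agent A1 A2 c (v 1) (v 2) (B 1) (B 2) hd12
      (fun g hg => hc g (hUM hg)) (fun g hg => hv 1 g (hUM hg))
      (fun g hg => hv 2 g (hUM hg)) (hB 1) hBle.2 hcA1 hcA2
  have hY1M : Y1 ⊆ M := hY1U.trans hUM
  have hY2M : Y2 ⊆ M := hY2U.trans hUM
  -- key numeric facts
  have h8 : 8 * α ≤ 1 - α := by linarith
  have hv1Y1 : (1 - α) * V1 / 8 ≤ tot (v 1) Y1 := by linarith
  have hv2Y2 : (1 - α) * V2 / 8 ≤ tot (v 2) Y2 := by linarith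
  have hαY1 : α * V1 ≤ tot (v 1) Y1 := by nlinarith
  have hαY2 : α * V2 ≤ tot (v 2) Y2 := by nlinarith
  have hv0Y0 : V0 ≤ tot (v 0) Y0 := hY0max (OPT 0) (hOPTsub 0) (hOPTbud 0)
  -- disjointness with Y0
  have hdY0U : Disjoint Y0 (A1 ∪ A2) := by
    rw [Finset.disjoint_union_right]
    exact ⟨Finset.disjoint_sdiff, Finset.disjoint_sdiff⟩
  have hd01 : Disjoint Y0 Y1 := hdY0U.mono_right hY1U
  have hd02 : Disjoint Y0 Y2 := hdY0U.mono_right hY2U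
  -- the allocation
  set Y : Fin 3 → Finset G := ![Y0, Y1, Y2] with hYdef
  have hYe0 : Y 0 = Y0 := rfl
  have hYe1 : Y 1 = Y1 := rfl
  have hYe2 : Y 2 = Y2 := rfl
  have hicases : ∀ i : Fin 3, i = 0 ∨ i = 1 ∨ i = 2 := by decide
  have hYM : ∀ i, Y i ⊆ M := by
    intro i
    rcases hicases i with h | h | h <;> rw [h]
    exacts [hY0M, hY1M, hY2M]
  refine ⟨Y, ⟨hYM, ?_, ?_⟩, ?_, ?_⟩
  · -- pairwise disjoint
    intro i j hij
    rcases hicases i with h | h | h <;> rcases hicases j with h' | h' | h' <;>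
      rw [h, h'] at hij ⊢ <;>
      first
        | exact absurd rfl hij
        | exact hd01 | exact hd02 | exact hd12' | exact hd01.symm | exact hd02.symm
        | exact hd12'.symm
  · -- budgets
    intro i
    rcases hicases i with h | h | h <;> rw [h]
    exacts [hY0c, hY1c, hY2c]
  · -- EFx
    intro i j S hS hcS g hg
    rcases hicases i with h | h | h <;> subst h
    · -- agent 0 never envies: Y0 is the overall affordable optimum
      have h1 : tot (v 0) (S.erase g) ≤ tot (v 0) S :=
        tot_mono (Finset.erase_subset _ _) fun x hx => hv 0 x ((hS.trans (hYM j)) hx)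
      exact le_trans h1 (hY0max S (hS.trans (hYM j)) hcS)
    · rcases hicases j with h' | h' | h' <;> rw [h'] at hS
      · -- agent 1 vs Y0 : monopoly bound
        have hSM : S ⊆ M := hS.trans hY0M
        have hcS0 : tot c S ≤ B 0 := le_trans (tot_mono hS hcY0) hY0c
        have h1 : tot (v 1) (S.erase g) ≤ tot (v 1) S :=
          tot_mono (Finset.erase_subset _ _) fun x hx => hv 1 x (hSM hx)
        have h2 := hmono 1 S hSM hcS0
        rw [hYe1]
        linarith
      · -- agent 1 vs itself
        rw [hYe1]
        exact tot_erase_le g hS fun x hx => hv 1 x (hY1M hx)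
      · -- agent 1 vs Y2
        rw [hYe1]
        exact hE12 S hS hcS g hg
    · rcases hicases j with h' | h' | h' <;> rw [h'] at hS
      · -- agent 2 vs Y0 : monopoly bound
        have hSM : S ⊆ M := hS.trans hY0M
        have hcS0 : tot c S ≤ B 0 := le_trans (tot_mono hS hcY0) hY0c
        have h1 : tot (v 2) (S.erase g) ≤ tot (v 2) S :=
          tot_mono (Finset.erase_subset _ _) fun x hx => hv 2 x (hSM hx)
        have h2 := hmono 2 S hSM hcS0
        rw [hYe2]
        linarith
      · -- agent 2 vs Y1
        rw [hYe2]
        exact hE21 S hS g hg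
      · -- agent 2 vs itself
        rw [hYe2]
        exact tot_erase_le g hS fun x hx => hv 2 x (hY2M hx)
  · -- NSW bound
    have hNSWY : NSW v Y = (tot (v 0) Y0 * tot (v 1) Y1 * tot (v 2) Y2) ^ ((1 : ℝ) / 3) := by
      unfold NSW
      rw [Fin.prod_univ_three]
      norm_num [hYe0, hYe1, hYe2]
    have hNSWO : NSW v OPT = (V0 * V1 * V2) ^ ((1 : ℝ) / 3) := by
      unfold NSW
      rw [Fin.prod_univ_three]
      norm_num [hV0def, hV1def, hV2def]
    have hco : (0 : ℝ) ≤ (1 - α) ^ 2 / (4 * 6 * 6) := by positivity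
    have hVp : (0 : ℝ) ≤ V0 * V1 * V2 := by positivity
    have hkey : (1 - α) ^ 2 / (4 * 6 * 6) * (V0 * V1 * V2) ≤
        tot (v 0) Y0 * tot (v 1) Y1 * tot (v 2) Y2 := by
      have hx : (0 : ℝ) ≤ (1 - α) ^ 2 * (V0 * V1 * V2) := by positivity
      have e1 : (1 - α) ^ 2 / (4 * 6 * 6) * (V0 * V1 * V2) ≤
          V0 * ((1 - α) * V1 / 8) * ((1 - α) * V2 / 8) := by
        have h1 : (1 - α) ^ 2 / (4 * 6 * 6) * (V0 * V1 * V2) =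
            (1 - α) ^ 2 * (V0 * V1 * V2) / 144 := by ring
        have h2 : V0 * ((1 - α) * V1 / 8) * ((1 - α) * V2 / 8) =
            (1 - α) ^ 2 * (V0 * V1 * V2) / 64 := by ring
        rw [h1, h2]
        linarith
      have hα1 : (0 : ℝ) ≤ 1 - α := by linarith
      have hn1 : (0 : ℝ) ≤ (1 - α) * V1 / 8 :=
        div_nonneg (mul_nonneg hα1 hV1.le) (by norm_num)
      have hn2 : (0 : ℝ) ≤ (1 - α) * V2 / 8 :=
        div_nonneg (mul_nonneg hα1 hV2.le) (by norm_num)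
      have e2 : V0 * ((1 - α) * V1 / 8) * ((1 - α) * V2 / 8) ≤
          tot (v 0) Y0 * tot (v 1) Y1 * tot (v 2) Y2 := by
        have m1 : V0 * ((1 - α) * V1 / 8) ≤ tot (v 0) Y0 * tot (v 1) Y1 :=
          mul_le_mul hv0Y0 hv1Y1 hn1 (le_trans hV0.le hv0Y0)
        exact mul_le_mul m1 hv2Y2 hn2
          (mul_nonneg (le_trans hV0.le hv0Y0) (le_trans hn1 hv1Y1))
      linarith
    rw [hNSWY, hNSWO, ← Real.mul_rpow hco hVp]
    exact Real.rpow_le_rpow (by positivity) hkey (by norm_num)
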